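/- Let d ≥ 2 and g, r ∈ GL(d, ℝ). Suppose g = k D k' and g r = k̂ D̂ k̂' are singular value decompositions, where k, k', k̂, k̂' are orthogonal d × d matrices and D, D̂ are diagonal with decreasing positive entries. Then 1 − ⟨k e₁, k̂ e₁⟩² ≤ (d − 1) · (σ₁(r) σ₁(r⁻¹))² · (D₂₂/D₁₁)². In particular, the sine of the angle between the Cartan attractors of g r and of g is at most √(d−1) · σ₁(r) σ₁(r⁻¹) · σ₂(g)/σ₁(g). -/

import Mathlib

open Matrix

/-- The list of singular values of a real square matrix, in decreasing order
(the square roots of the eigenvalues of `Aᴴ * A`). -/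
noncomputable def svalList {n : Type*} [Fintype n] [DecidableEq n]
    (A : Matrix n n ℝ) : List ℝ :=
  (Multiset.sort
    (Finset.univ.val.map fun i =>
      Real.sqrt ((Matrix.isHermitian_conjTranspose_mul_self A).eigenvalues i)) (· ≤ ·)).reverse

/-- `sval j A` is the `j`-th largest singular value `σⱼ(A)` of `A` (1-indexed). -/
noncomputable def sval {n : Type*} [Fintype n] [DecidableEq n]
    (j : ℕ) (A : Matrix n n ℝ) : ℝ :=
  (svalList A).getD (j - 1) 0

/-! Write `û = k̂ e₁` and `v̂ = k̂'ᵀ e₁`, so that `g (r v̂) = D̂₁ û`. In the basis given by the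
columns of `k`, the coordinates of `g w` are `Dᵢ (k' w)ᵢ`, so the part of `D̂₁ û` orthogonal to
`k e₁` has squared length `D̂₁² (1 − ⟨k e₁, û⟩²) ≤ D₂² |r v̂|² ≤ D₂² σ₁(r)²`. On the other hand
`D₁ = |g k'ᵀ e₁| = |(g r)(r⁻¹ k'ᵀ e₁)| ≤ D̂₁ σ₁(r⁻¹)`, and dividing the first bound by the
square of the second gives the claim. -/

theorem le_getD_zero_of_pairwise_ge {α : Type*} [Preorder α] {l : List α}
    (hl : l.Pairwise (· ≥ ·)) {a : α} (ha : a ∈ l) (b : α) : a ≤ l.getD 0 b := by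
  cases l with
  | nil => simp at ha
  | cons c t =>
    rcases List.mem_cons.1 ha with rfl | ha
    · exact le_rfl
    · exact List.rel_of_pairwise_cons hl ha

section DotProduct

variable {n : Type*} [Fintype n]

theorem sum_mul_sq_le_mul_dotProduct_self {s : Finset n} {a : n → ℝ} {c : ℝ} (hc : 0 ≤ c)
    (ha : ∀ i ∈ s, a i ≤ c) (v : n → ℝ) : ∑ i ∈ s, a i * v i ^ 2 ≤ c * (v ⬝ᵥ v) :=
  calc ∑ i ∈ s, a i * v i ^ 2
      ≤ ∑ i ∈ s, c * v i ^ 2 := Finset.sum_le_sum fun i hi =>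
        mul_le_mul_of_nonneg_right (ha i hi) (sq_nonneg _)
    _ ≤ ∑ i, c * v i ^ 2 := Finset.sum_le_univ_sum_of_nonneg fun i => by positivity
    _ = c * (v ⬝ᵥ v) := by simp only [dotProduct, Finset.mul_sum, sq]

theorem dotProduct_mulVec_self_eq_dotProduct_transpose_mul_mulVec {m : Type*} [Fintype m]
    (A : Matrix m n ℝ) (v : n → ℝ) : (A *ᵥ v) ⬝ᵥ (A *ᵥ v) = v ⬝ᵥ ((Aᵀ * A) *ᵥ v) := by
  rw [← mulVec_mulVec, mulVec_transpose, dotProduct_comm v, ← dotProduct_mulVec]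

variable [DecidableEq n]

theorem dotProduct_mulVec_self_of_transpose_mul_eq_one {Q : Matrix n n ℝ} (hQ : Qᵀ * Q = 1)
    (v : n → ℝ) : (Q *ᵥ v) ⬝ᵥ (Q *ᵥ v) = v ⬝ᵥ v := by
  rw [dotProduct_mulVec_self_eq_dotProduct_transpose_mul_mulVec, hQ, one_mulVec]

theorem dotProduct_row_self_of_mul_transpose_eq_one {Q : Matrix n n ℝ} (hQ : Q * Qᵀ = 1) (i : n) :
    Q.row i ⬝ᵥ Q.row i = 1 := by
  have := congrFun₂ hQ i i
  rwa [mul_apply', one_apply_eq] at this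

theorem dotProduct_col_self_of_transpose_mul_eq_one {Q : Matrix n n ℝ} (hQ : Qᵀ * Q = 1) (i : n) :
    Q.col i ⬝ᵥ Q.col i = 1 := by
  have := congrFun₂ hQ i i
  rwa [mul_apply', one_apply_eq] at this

end DotProduct

section SingularValues

variable {n : Type*} [Fintype n] [DecidableEq n]

theorem eigenvalues_le_sval_one_sq (A : Matrix n n ℝ) (i : n) :
    (isHermitian_conjTranspose_mul_self A).eigenvalues i ≤ sval 1 A ^ 2 := by
  have hmem : √((isHermitian_conjTranspose_mul_self A).eigenvalues i) ∈ svalList A := by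
    simp [svalList]
  have hsorted : (svalList A).Pairwise (· ≥ ·) :=
    List.pairwise_reverse.2 (Multiset.pairwise_sort _ _)
  rw [← Real.sq_sqrt (eigenvalues_conjTranspose_mul_self_nonneg A i)]
  exact pow_le_pow_left₀ (Real.sqrt_nonneg _) (le_getD_zero_of_pairwise_ge hsorted hmem 0) 2

theorem dotProduct_mulVec_self_le_sval_one_sq (A : Matrix n n ℝ) (v : n → ℝ) :
    (A *ᵥ v) ⬝ᵥ (A *ᵥ v) ≤ sval 1 A ^ 2 * (v ⬝ᵥ v) := by
  set hA := isHermitian_conjTranspose_mul_self A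
  set U : Matrix n n ℝ := ↑hA.eigenvectorUnitary
  have hstar : star U = Uᵀ := by
    rw [star_eq_conjTranspose, conjTranspose_eq_transpose_of_trivial]
  have hdiag : Uᵀ * (Aᴴ * A) * U = diagonal hA.eigenvalues := by
    have h := hA.conjStarAlgAut_star_eigenvectorUnitary
    rwa [Unitary.conjStarAlgAut_star_apply, hstar, RCLike.ofReal_real_eq_id,
      Function.id_comp] at h
  have hUUt : U * Uᵀ = 1 := hstar ▸ mem_unitaryGroup_iff.mp hA.eigenvectorUnitary.2
  have hUtU : Uᵀ * U = 1 := mul_eq_one_comm.mp hUUt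
  set w := Uᵀ *ᵥ v
  have hv : v = U *ᵥ w := by rw [mulVec_mulVec, hUUt, one_mulVec]
  calc (A *ᵥ v) ⬝ᵥ (A *ᵥ v) = ((A * U) *ᵥ w) ⬝ᵥ ((A * U) *ᵥ w) := by rw [hv, mulVec_mulVec]
    _ = w ⬝ᵥ (diagonal hA.eigenvalues *ᵥ w) := by
        rw [dotProduct_mulVec_self_eq_dotProduct_transpose_mul_mulVec, ← hdiag, transpose_mul,
          conjTranspose_eq_transpose_of_trivial]
        simp only [Matrix.mul_assoc]
    _ = ∑ i, hA.eigenvalues i * w i ^ 2 := by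
        simp only [dotProduct, mulVec_diagonal]; congr 1; ext i; ring
    _ ≤ sval 1 A ^ 2 * (w ⬝ᵥ w) :=
        sum_mul_sq_le_mul_dotProduct_self (sq_nonneg _)
          (fun i _ => eigenvalues_le_sval_one_sq A i) w
    _ = sval 1 A ^ 2 * (v ⬝ᵥ v) := by
        rw [hv, dotProduct_mulVec_self_of_transpose_mul_eq_one hUtU]

end SingularValues

section SVD

variable {n : Type*} [Fintype n] [DecidableEq n]

/-- Unlike the usual convention, `D` is not required to be sorted. -/
structure IsSVD (M k : Matrix n n ℝ) (D : n → ℝ) (k' : Matrix n n ℝ) : Prop where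
  left_orthogonal : k * kᵀ = 1
  right_orthogonal : k' * k'ᵀ = 1
  nonneg : ∀ i, 0 ≤ D i
  eq : M = k * diagonal D * k'

theorem one_sub_sq_dotProduct_col_eq_sum_erase {k : Matrix n n ℝ} (hk : k * kᵀ = 1)
    {u : n → ℝ} (hu : u ⬝ᵥ u = 1) (i₀ : n) :
    1 - (k.col i₀ ⬝ᵥ u) ^ 2 = ∑ i ∈ Finset.univ.erase i₀, (kᵀ *ᵥ u) i ^ 2 := by
  have hnorm : ∑ i, (kᵀ *ᵥ u) i ^ 2 = 1 := by
    rw [← hu, ← dotProduct_mulVec_self_of_transpose_mul_eq_one (by rwa [transpose_transpose])]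
    simp only [dotProduct, sq]
  have hi₀ : (kᵀ *ᵥ u) i₀ = k.col i₀ ⬝ᵥ u := rfl
  rw [← hnorm, ← Finset.add_sum_erase _ _ (Finset.mem_univ i₀), hi₀, add_sub_cancel_left]

namespace IsSVD

variable {M k k' : Matrix n n ℝ} {D : n → ℝ}

theorem mulVec_row (h : IsSVD M k D k') (i : n) : M *ᵥ k'.row i = D i • k.col i := by
  have hrow : k' *ᵥ k'.row i = Pi.single i 1 := by
    rw [show k'.row i = k'ᵀ *ᵥ Pi.single i 1 from (mulVec_single_one k'ᵀ i).symm, mulVec_mulVec,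
      h.right_orthogonal, one_mulVec]
  rw [h.eq, ← mulVec_mulVec, ← mulVec_mulVec, hrow, diagonal_mulVec_single,
    mul_one, mulVec_single, op_smul_eq_smul]

theorem transpose_mulVec_mulVec (h : IsSVD M k D k') (z : n → ℝ) :
    kᵀ *ᵥ (M *ᵥ z) = diagonal D *ᵥ (k' *ᵥ z) := by
  rw [h.eq, mulVec_mulVec, ← Matrix.mul_assoc, ← Matrix.mul_assoc,
    mul_eq_one_comm.mp h.left_orthogonal, Matrix.one_mul, mulVec_mulVec]

theorem sum_sq_transpose_mulVec_le (h : IsSVD M k D k') {s : Finset n} {c : ℝ}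
    (hD : ∀ i ∈ s, D i ≤ c) (z : n → ℝ) :
    ∑ i ∈ s, (kᵀ *ᵥ (M *ᵥ z)) i ^ 2 ≤ c ^ 2 * (z ⬝ᵥ z) := by
  have hk' : k'ᵀ * k' = 1 := mul_eq_one_comm.mp h.right_orthogonal
  calc ∑ i ∈ s, (kᵀ *ᵥ (M *ᵥ z)) i ^ 2 = ∑ i ∈ s, D i ^ 2 * (k' *ᵥ z) i ^ 2 := by
        simp only [h.transpose_mulVec_mulVec, mulVec_diagonal, mul_pow]
    _ ≤ c ^ 2 * ((k' *ᵥ z) ⬝ᵥ (k' *ᵥ z)) :=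
        sum_mul_sq_le_mul_dotProduct_self (sq_nonneg c)
          (fun i hi => pow_le_pow_left₀ (h.nonneg i) (hD i hi) 2) _
    _ = c ^ 2 * (z ⬝ᵥ z) := by rw [dotProduct_mulVec_self_of_transpose_mul_eq_one hk']

theorem dotProduct_mulVec_self_le (h : IsSVD M k D k') {c : ℝ} (hD : ∀ i, D i ≤ c)
    (z : n → ℝ) : (M *ᵥ z) ⬝ᵥ (M *ᵥ z) ≤ c ^ 2 * (z ⬝ᵥ z) := by
  have hkt : kᵀᵀ * kᵀ = 1 := by rw [transpose_transpose, h.left_orthogonal]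
  rw [← dotProduct_mulVec_self_of_transpose_mul_eq_one hkt]
  simpa only [dotProduct, sq] using h.sum_sq_transpose_mulVec_le (s := Finset.univ)
    (fun i _ => hD i) z

variable {r khat khat' : Matrix n n ℝ} {Dhat : n → ℝ}

theorem sq_le_sq_mul_sval_one_inv (hg : IsSVD M k D k') (hgr : IsSVD (M * r) khat Dhat khat')
    (hr : IsUnit r.det) {c : ℝ} (hDhat : ∀ j, Dhat j ≤ c) (i : n) :
    D i ^ 2 ≤ c ^ 2 * sval 1 r⁻¹ ^ 2 := by
  have hrow := dotProduct_row_self_of_mul_transpose_eq_one hg.right_orthogonal i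
  have hcol := dotProduct_col_self_of_transpose_mul_eq_one (mul_eq_one_comm.mp hg.left_orthogonal) i
  have hfactor : M *ᵥ k'.row i = (M * r) *ᵥ (r⁻¹ *ᵥ k'.row i) := by
    rw [mulVec_mulVec, Matrix.mul_assoc, mul_nonsing_inv r hr, Matrix.mul_one]
  calc D i ^ 2 = (M *ᵥ k'.row i) ⬝ᵥ (M *ᵥ k'.row i) := by
        rw [hg.mulVec_row, smul_dotProduct, dotProduct_smul, hcol, smul_eq_mul, smul_eq_mul]; ring
    _ ≤ c ^ 2 * ((r⁻¹ *ᵥ k'.row i) ⬝ᵥ (r⁻¹ *ᵥ k'.row i)) := by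
        rw [hfactor]; exact hgr.dotProduct_mulVec_self_le hDhat _
    _ ≤ c ^ 2 * sval 1 r⁻¹ ^ 2 := by
        gcongr
        simpa [hrow] using dotProduct_mulVec_self_le_sval_one_sq r⁻¹ (k'.row i)

theorem sq_mul_one_sub_sq_dotProduct_col_le (hg : IsSVD M k D k')
    (hgr : IsSVD (M * r) khat Dhat khat') (i₀ : n) {c : ℝ} (hD : ∀ i ≠ i₀, D i ≤ c) :
    Dhat i₀ ^ 2 * (1 - (k.col i₀ ⬝ᵥ khat.col i₀) ^ 2) ≤ c ^ 2 * sval 1 r ^ 2 := by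
  set w := r *ᵥ khat'.row i₀
  have hw : M *ᵥ w = Dhat i₀ • khat.col i₀ := by rw [mulVec_mulVec, hgr.mulVec_row]
  have hunit := dotProduct_col_self_of_transpose_mul_eq_one
    (mul_eq_one_comm.mp hgr.left_orthogonal) i₀
  calc Dhat i₀ ^ 2 * (1 - (k.col i₀ ⬝ᵥ khat.col i₀) ^ 2)
      = ∑ i ∈ Finset.univ.erase i₀, (kᵀ *ᵥ (M *ᵥ w)) i ^ 2 := by
        rw [one_sub_sq_dotProduct_col_eq_sum_erase hg.left_orthogonal hunit, Finset.mul_sum, hw,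
          mulVec_smul]
        simp only [Pi.smul_apply, smul_eq_mul, mul_pow]
    _ ≤ c ^ 2 * (w ⬝ᵥ w) :=
        hg.sum_sq_transpose_mulVec_le (fun i hi => hD i (Finset.ne_of_mem_erase hi)) w
    _ ≤ c ^ 2 * sval 1 r ^ 2 := by
        gcongr
        simpa [dotProduct_row_self_of_mul_transpose_eq_one hgr.right_orthogonal]
          using dotProduct_mulVec_self_le_sval_one_sq r (khat'.row i₀)

end IsSVD

end SVD

/-- Let `d ≥ 2` and `g, r ∈ GL(d, ℝ)`, with singular value decompositions
`g = k D k'` and `g r = k̂ D̂ k̂'`.  Then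
`1 − ⟨k e₁, k̂ e₁⟩² ≤ (d − 1) (σ₁(r) σ₁(r⁻¹))² (D₂₂/D₁₁)²`; i.e. the sine of the angle
between the Cartan attractors of `g r` and of `g` is at most
`√(d−1) σ₁(r) σ₁(r⁻¹) σ₂(g)/σ₁(g)`. -/
theorem sine_angle_cartan_attractors_mul
    (d : ℕ) (hd : 2 ≤ d)
    (g r : Matrix (Fin d) (Fin d) ℝ) (hr_unit : IsUnit r.det)
    (k k' khat khat' : Matrix (Fin d) (Fin d) ℝ)
    (hk : k * kᵀ = 1) (hk' : k' * k'ᵀ = 1)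
    (hkhat : khat * khatᵀ = 1) (hkhat' : khat' * khat'ᵀ = 1)
    (D Dhat : Fin d → ℝ)
    (hDpos : ∀ i, 0 < D i) (hDanti : ∀ i j : Fin d, i ≤ j → D j ≤ D i)
    (hDhatpos : ∀ i, 0 < Dhat i) (hDhatanti : ∀ i j : Fin d, i ≤ j → Dhat j ≤ Dhat i)
    (hgdec : g = k * Matrix.diagonal D * k')
    (hgrdec : g * r = khat * Matrix.diagonal Dhat * khat') :
    1 - ((fun i => k i ⟨0, by omega⟩) ⬝ᵥ fun i => khat i ⟨0, by omega⟩) ^ 2 ≤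
      ((d : ℝ) - 1) * (sval 1 r * sval 1 r⁻¹) ^ 2 *
        (D ⟨1, by omega⟩ / D ⟨0, by omega⟩) ^ 2 := by
  set i₀ : Fin d := ⟨0, by omega⟩
  set i₁ : Fin d := ⟨1, by omega⟩
  have hg : IsSVD g k D k' := ⟨hk, hk', fun i => (hDpos i).le, hgdec⟩
  have hgr : IsSVD (g * r) khat Dhat khat' := ⟨hkhat, hkhat', fun i => (hDhatpos i).le, hgrdec⟩
  have htail := hg.sq_mul_one_sub_sq_dotProduct_col_le hgr i₀ (c := D i₁) fun i hi =>
    hDanti i₁ i (Nat.one_le_iff_ne_zero.2 fun h => hi (Fin.ext h))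
  have hhead := hg.sq_le_sq_mul_sval_one_inv hgr hr_unit (c := Dhat i₀)
    (fun j => hDhatanti i₀ j (Nat.zero_le j)) i₀
  have hd1 : (1 : ℝ) ≤ d - 1 := by
    have : (2 : ℝ) ≤ d := by exact_mod_cast hd
    linarith
  change 1 - (k.col i₀ ⬝ᵥ khat.col i₀) ^ 2 ≤ _
  set a := 1 - (k.col i₀ ⬝ᵥ khat.col i₀) ^ 2
  have hbound : 0 ≤ ((d : ℝ) - 1) * (sval 1 r * sval 1 r⁻¹) ^ 2 * D i₁ ^ 2 := by positivity
  rw [div_pow, ← mul_div_assoc, le_div_iff₀ (pow_pos (hDpos i₀) 2)]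
  rcases le_or_gt a 0 with ha | ha
  · nlinarith [sq_nonneg (D i₀)]
  calc a * D i₀ ^ 2 ≤ a * (Dhat i₀ ^ 2 * sval 1 r⁻¹ ^ 2) := by gcongr
    _ = Dhat i₀ ^ 2 * a * sval 1 r⁻¹ ^ 2 := by ring
    _ ≤ D i₁ ^ 2 * sval 1 r ^ 2 * sval 1 r⁻¹ ^ 2 := by gcongr
    _ ≤ ((d : ℝ) - 1) * (sval 1 r * sval 1 r⁻¹) ^ 2 * D i₁ ^ 2 := by
        nlinarith [sq_nonneg (D i₁ * sval 1 r * sval 1 r⁻¹)]
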